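/- Consider the linear demand model with covariates, with parameters α ∈ ℝ, β ∈ ℝ^m and φ_i ∈ ℝ^{m×i} for i = 1,…,n, context vector z ∈ ℝ^m, and horizon H ≥ n. For a price vector p = (p_1,…,p_H) ∈ ℝ^H, let s_h = [p_{max(1,h−n)},…,p_{h−2},p_{h−1}]ᵀ for 2 ≤ h ≤ H, and define the episode value V_p = Σ_{h=1}^H p_h·d_h where d_1 = α + (zᵀβ)·p_1, d_h = α + (zᵀβ)·p_h + zᵀφ_{h−1}·s_h for 2 ≤ h ≤ n, and d_h = α + (zᵀβ)·p_h + zᵀφ_n·s_h for n+1 ≤ h ≤ H. Define the H×H matrix M_θ by: M_θ[h,h] = zᵀβ for 1 ≤ h ≤ H; M_θ[max(h−n,1):h−1, h] = (1/2)·(zᵀφ_{min(h−1,n)})ᵀ and M_θ[h, max(h−n,1):h−1] = (1/2)·zᵀφ_{min(h−1,n)} for 2 ≤ h ≤ H; and all other entries zero. Then V_p = pᵀ·M_θ·p + α·1ᵀ·p, where p is treated as a column vector in ℝ^H and 1 is the all-ones vector. -/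
import Mathlib


/-!
Statement 14: linear demand model with covariates.  With context `z ∈ ℝ^m`, the
episode value `V_p = Σ_h p_h · d_h`, where
`d_h = α + (zᵀβ)·p_h + zᵀφ_{min(h-1,n)}·s_h`, equals `pᵀ M_θ p + α·1ᵀp`.

Periods are 0-indexed (the paper's period `h` is our `h-1`); the state at period `h`
is `[p_{max(0,h-n)},…,p_{h-1}]`, of length `min h n`.  The parameters are
`φ : (i : ℕ) → Matrix (Fin m) (Fin i) ℝ` (only `φ_1,…,φ_n` are used), and
`zᵀφ_l ∈ ℝ^{1×l}` is the row vector with entries `Σ_r z_r·(φ_l)_{r,j}`.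
-/

noncomputable section
open Matrix

/-- The `n`-step price history (state) before (0-indexed) period `h`:
`s_h = [p_{max(0,h-n)}, …, p_{h-1}]`. -/
def stateList (n : ℕ) (p : ℕ → ℝ) (h : ℕ) : List ℝ :=
  ((List.range h).drop (h - n)).map p

/-- Expected demand in the linear model with covariates:
`d = α + (zᵀβ)·p + (zᵀφ_l)·s` where `l` is the length of the state `s`. -/
def linDemandCov (m : ℕ) (a : ℝ) (b : Fin m → ℝ) (φ : (i : ℕ) → Matrix (Fin m) (Fin i) ℝ)
    (z : Fin m → ℝ) (p : ℝ) (s : List ℝ) : ℝ :=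
  a + (∑ r, z r * b r) * p + ∑ j : Fin s.length, (∑ r, z r * φ s.length r j) * s.get j

/-- Episode value `V_p = Σ_{h=1}^H p_h · d_h` over horizon `H` with `n`-step memory. -/
def linValueCov (H n m : ℕ) (a : ℝ) (b : Fin m → ℝ)
    (φ : (i : ℕ) → Matrix (Fin m) (Fin i) ℝ) (z : Fin m → ℝ) (p : ℕ → ℝ) : ℝ :=
  ∑ h ∈ Finset.range H, p h * linDemandCov m a b φ z (p h) (stateList n p h)

/-- The `H × H` matrix `M_θ`: diagonal entries `zᵀβ`; for a column `h` (0-indexed),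
the entries in rows `max(h-n,0),…,h-1` are `(1/2)·(zᵀφ_{min(h,n)})ᵀ`, symmetrically in
rows; all other entries vanish. -/
def linMCov (n H m : ℕ) (b : Fin m → ℝ) (φ : (i : ℕ) → Matrix (Fin m) (Fin i) ℝ)
    (z : Fin m → ℝ) : Matrix (Fin H) (Fin H) ℝ :=
  fun g h =>
    if g = h then ∑ r, z r * b r
    else if hc : (g : ℕ) < h ∧ (h : ℕ) - g ≤ n then
      (1 / 2) * ∑ r, z r * φ (min (h : ℕ) n) r ⟨(g : ℕ) - ((h : ℕ) - min (h : ℕ) n), by omega⟩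
    else if hc' : (h : ℕ) < g ∧ (g : ℕ) - h ≤ n then
      (1 / 2) * ∑ r, z r * φ (min (g : ℕ) n) r ⟨(h : ℕ) - ((g : ℕ) - min (g : ℕ) n), by omega⟩
    else 0


/-! ### Auxiliary definitions and lemmas for the proof -/

/-- Totalized row vector `zᵀφ_l`: the `j`-th entry for `j < l`, else `0`. -/
def wt (m : ℕ) (φ : (i : ℕ) → Matrix (Fin m) (Fin i) ℝ) (z : Fin m → ℝ) (l j : ℕ) : ℝ :=
  if hl : j < l then (∑ r, z r * φ l r ⟨j, hl⟩) else 0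

lemma stateList_length (n : ℕ) (p : ℕ → ℝ) (h : ℕ) :
    (stateList n p h).length = min h n := by
  simp [stateList]; omega

lemma stateList_getD (n : ℕ) (p : ℕ → ℝ) (h j : ℕ) (hj : j < min h n) :
    (stateList n p h).getD j 0 = p (h - n + j) := by
  have hlen : j < (stateList n p h).length := by rw [stateList_length]; exact hj
  rw [List.getD_eq_getElem _ _ hlen]
  simp only [stateList, List.getElem_map, List.getElem_drop, List.getElem_range]

lemma linDemandCov_eq (m n : ℕ) (a : ℝ) (b : Fin m → ℝ)
    (φ : (i : ℕ) → Matrix (Fin m) (Fin i) ℝ) (z : Fin m → ℝ) (p : ℕ → ℝ) (x : ℝ) (h : ℕ) :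
    linDemandCov m a b φ z x (stateList n p h)
      = a + (∑ r, z r * b r) * x
        + ∑ j ∈ Finset.range (min h n), wt m φ z (min h n) j * p (h - n + j) := by
  rw [linDemandCov]
  congr 1
  have step1 : ∀ s : List ℝ,
      (∑ j : Fin s.length, (∑ r, z r * φ s.length r j) * s.get j)
        = ∑ k ∈ Finset.range s.length, wt m φ z s.length k * s.getD k 0 := by
    intro s
    rw [← Fin.sum_univ_eq_sum_range]
    refine Finset.sum_congr rfl fun j _ => ?_
    simp only [wt]
    rw [dif_pos j.isLt]
    simp [List.getD_eq_getElem _ _ j.isLt]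
  rw [step1, stateList_length]
  refine Finset.sum_congr rfl fun k hk => ?_
  rw [stateList_getD n p h k (Finset.mem_range.mp hk)]

/-- Totalized "upper triangle" part of `M_θ`. -/
def Un (m : ℕ) (φ : (i : ℕ) → Matrix (Fin m) (Fin i) ℝ) (z : Fin m → ℝ) (n g h : ℕ) : ℝ :=
  if g < h ∧ h - g ≤ n then (1 / 2) * wt m φ z (min h n) (g - (h - n)) else 0

lemma linMCov_eq (n H m : ℕ) (b : Fin m → ℝ) (φ : (i : ℕ) → Matrix (Fin m) (Fin i) ℝ)
    (z : Fin m → ℝ) (g h : Fin H) :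
    linMCov n H m b φ z g h
      = (if (g : ℕ) = (h : ℕ) then ∑ r, z r * b r else 0)
        + Un m φ z n g h + Un m φ z n h g := by
  rw [linMCov, Un, Un]
  by_cases hgh : g = h
  · subst hgh
    simp
  · have hgh' : (g : ℕ) ≠ (h : ℕ) := fun e => hgh (Fin.ext e)
    rw [if_neg hgh, if_neg hgh']
    by_cases h1 : (g : ℕ) < h ∧ (h : ℕ) - g ≤ n
    · rw [dif_pos h1, if_pos h1, if_neg (by omega), wt, dif_pos (by omega)]
      have : (⟨(g : ℕ) - ((h : ℕ) - min (h : ℕ) n), by omega⟩ : Fin (min (h : ℕ) n))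
          = ⟨(g : ℕ) - ((h : ℕ) - n), by omega⟩ := Fin.ext (by simp; omega)
      rw [this]
      ring
    · rw [dif_neg h1, if_neg h1]
      by_cases h2 : (h : ℕ) < g ∧ (g : ℕ) - h ≤ n
      · rw [dif_pos h2, if_pos h2, wt, dif_pos (by omega)]
        have : (⟨(h : ℕ) - ((g : ℕ) - min (g : ℕ) n), by omega⟩ : Fin (min (g : ℕ) n))
            = ⟨(h : ℕ) - ((g : ℕ) - n), by omega⟩ := Fin.ext (by simp; omega)
        rw [this]
        ring
      · rw [dif_neg h2, if_neg h2]
        ring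

lemma reindex (n : ℕ) (F : ℕ → ℝ) {h H : ℕ} (hh : h < H) :
    (∑ g ∈ Finset.range H, if g < h ∧ h - g ≤ n then F g else 0)
      = ∑ j ∈ Finset.range (min h n), F (h - n + j) := by
  rw [← Finset.sum_filter]
  refine Finset.sum_nbij' (i := fun g => g - (h - n)) (j := fun j => h - n + j)
    ?_ ?_ ?_ ?_ ?_ <;>
    · intro x hx
      simp only [Finset.mem_filter, Finset.mem_range] at hx ⊢
      first
        | omega
        | (congr 1; omega)

/-- For the linear demand model with covariates, parameters
`α ∈ ℝ, β ∈ ℝ^m, φ_1,…,φ_n`, context `z ∈ ℝ^m` and horizon `H ≥ n`, the episode value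
of any price vector `p ∈ ℝ^H` satisfies `V_p = pᵀ M_θ p + α·1ᵀp`. -/
theorem linValueCov_eq_quadratic_form
    (n H m : ℕ) (hHn : n ≤ H) (a : ℝ) (b : Fin m → ℝ)
    (φ : (i : ℕ) → Matrix (Fin m) (Fin i) ℝ) (z : Fin m → ℝ) (p : Fin H → ℝ) :
    linValueCov H n m a b φ z (fun h => if hh : h < H then p ⟨h, hh⟩ else 0)
      = p ⬝ᵥ (linMCov n H m b φ z).mulVec p + a * (∑ h, p h) := by
  set p' : ℕ → ℝ := fun h => if hh : h < H then p ⟨h, hh⟩ else 0 with hp'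
  have hps : ∀ g : Fin H, p' (g : ℕ) = p g := by
    intro g
    rw [hp']
    simp [g.isLt]
  -- LHS
  have hL : linValueCov H n m a b φ z p'
      = ∑ h ∈ Finset.range H,
          (a * p' h + (∑ r, z r * b r) * (p' h * p' h)
            + ∑ j ∈ Finset.range (min h n),
                p' h * (wt m φ z (min h n) j * p' (h - n + j))) := by
    rw [linValueCov]
    refine Finset.sum_congr rfl fun h _ => ?_
    rw [linDemandCov_eq m n a b φ z p' (p' h) h, mul_add, mul_add, Finset.mul_sum]
    ring
  -- RHS quadratic form
  have hQ : p ⬝ᵥ (linMCov n H m b φ z).mulVec p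
      = (∑ h ∈ Finset.range H, (∑ r, z r * b r) * (p' h * p' h))
        + 2 * ∑ h ∈ Finset.range H,
            ∑ j ∈ Finset.range (min h n),
              p' (h - n + j) * ((1 / 2) * wt m φ z (min h n) j) * p' h := by
    have expand : p ⬝ᵥ (linMCov n H m b φ z).mulVec p
        = ∑ g : Fin H, ∑ h : Fin H,
            (p g * ((if (g : ℕ) = (h : ℕ) then ∑ r, z r * b r else 0) * p h)
              + p g * (Un m φ z n g h * p h) + p g * (Un m φ z n h g * p h)) := by
      simp only [dotProduct, mulVec, Finset.mul_sum]
      refine Finset.sum_congr rfl fun g _ => Finset.sum_congr rfl fun h _ => ?_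
      rw [linMCov_eq n H m b φ z g h]
      ring
    rw [expand]
    simp only [Finset.sum_add_distrib]
    have hS1 : (∑ g : Fin H, ∑ h : Fin H,
          p g * ((if (g : ℕ) = (h : ℕ) then ∑ r, z r * b r else 0) * p h))
        = ∑ h ∈ Finset.range H, (∑ r, z r * b r) * (p' h * p' h) := by
      have e : ∀ g : Fin H, (∑ h : Fin H,
            p g * ((if (g : ℕ) = (h : ℕ) then ∑ r, z r * b r else 0) * p h))
          = (∑ r, z r * b r) * (p g * p g) := by
        intro g
        simp only [Fin.val_eq_val, mul_ite, ite_mul, zero_mul, mul_zero,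
          Finset.sum_ite_eq, Finset.mem_univ, if_true]
        ring
      rw [Finset.sum_congr rfl fun g _ => e g, ← Fin.sum_univ_eq_sum_range]
      exact Finset.sum_congr rfl fun h _ => by rw [hps]
    have hS3 : (∑ g : Fin H, ∑ h : Fin H, p g * (Un m φ z n h g * p h))
        = ∑ g : Fin H, ∑ h : Fin H, p g * (Un m φ z n g h * p h) := by
      rw [Finset.sum_comm]
      exact Finset.sum_congr rfl fun h _ => Finset.sum_congr rfl fun g _ => by ring
    have hS2 : (∑ g : Fin H, ∑ h : Fin H, p g * (Un m φ z n g h * p h))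
        = ∑ h ∈ Finset.range H,
            ∑ j ∈ Finset.range (min h n),
              p' (h - n + j) * ((1 / 2) * wt m φ z (min h n) j) * p' h := by
      rw [Finset.sum_comm, ← Fin.sum_univ_eq_sum_range]
      refine Finset.sum_congr rfl fun h _ => ?_
      have e1 : (∑ g : Fin H, p g * (Un m φ z n g h * p h))
          = ∑ g ∈ Finset.range H,
              (if g < (h : ℕ) ∧ (h : ℕ) - g ≤ n then
                p' g * ((1 / 2) * wt m φ z (min (h : ℕ) n) (g - ((h : ℕ) - n))) * p' (h : ℕ)
              else 0) := by
        rw [← Fin.sum_univ_eq_sum_range]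
        refine Finset.sum_congr rfl fun g _ => ?_
        rw [← hps g, ← hps h]
        simp only [Un]
        split_ifs with hcond
        · ring
        · ring
      rw [e1, reindex n _ h.isLt]
      refine Finset.sum_congr rfl fun j hj => ?_
      have ej : (h : ℕ) - n + j - ((h : ℕ) - n) = j := by omega
      rw [ej]
    rw [hS1, hS3, hS2]
    ring
  have hsum : (∑ h, p h) = ∑ h ∈ Finset.range H, p' h := by
    rw [← Fin.sum_univ_eq_sum_range]
    exact Finset.sum_congr rfl fun h _ => (hps h).symm
  rw [hL, hQ, hsum]
  have h2 : (2 : ℝ) * ∑ h ∈ Finset.range H,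
        ∑ j ∈ Finset.range (min h n),
          p' (h - n + j) * ((1 / 2) * wt m φ z (min h n) j) * p' h
      = ∑ h ∈ Finset.range H, (2 : ℝ) *
        ∑ j ∈ Finset.range (min h n),
          p' (h - n + j) * ((1 / 2) * wt m φ z (min h n) j) * p' h :=
    Finset.mul_sum _ _ _
  have h3 : a * ∑ h ∈ Finset.range H, p' h = ∑ h ∈ Finset.range H, a * p' h :=
    Finset.mul_sum _ _ _
  rw [h2, h3, ← Finset.sum_add_distrib, ← Finset.sum_add_distrib]
  refine Finset.sum_congr rfl fun h _ => ?_
  have h4 : (2 : ℝ) * ∑ j ∈ Finset.range (min h n),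
        p' (h - n + j) * ((1 / 2) * wt m φ z (min h n) j) * p' h
      = ∑ j ∈ Finset.range (min h n),
        p' h * (wt m φ z (min h n) j * p' (h - n + j)) := by
    rw [Finset.mul_sum]
    exact Finset.sum_congr rfl fun j _ => by ring
  rw [h4]
  ring

end
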